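/- Assume Λ({0}) = 0. Then for all integers 1 ≤ k ≤ b−1 one has λ(b) − Σ_{j=2}^{k} C(b,j) λ_{b,j} = C(b,k)(b−k) ∫_0^1 y^k (1−y)^{b−k−1} T(y) dy, where the sum on the left is empty for k = 1 and C(b,k) denotes the binomial coefficient. -/

import Mathlib

open MeasureTheory Real Set Filter Topology

/-- The integrand of `lam`, with its continuous extension `x(x-1)/2` at `p = 0`. -/
noncomputable def lamInt (x p : ℝ) : ℝ :=
  if p = 0 then x * (x - 1) / 2
  else (1 - (1 - p) ^ x - x * p * (1 - p) ^ (x - 1)) / p ^ 2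

/-- The total jump rate function `λ(x)` of the `Λ`-coalescent. -/
noncomputable def lam (Λ : Measure ℝ) (x : ℝ) : ℝ :=
  ∫ p in Set.Icc (0:ℝ) 1, lamInt x p ∂Λ

/-- The merging rate `λ_{b,k} = ∫_{[0,1]} p^{k−2} (1−p)^{b−k} Λ(dp)`. -/
noncomputable def lamBK (Λ : Measure ℝ) (b k : ℕ) : ℝ :=
  ∫ p in Set.Icc (0:ℝ) 1, p ^ ((k : ℝ) - 2) * (1 - p) ^ ((b : ℝ) - (k : ℝ)) ∂Λ

/-- `T(y) = ∫_{(y,1]} p⁻² Λ(dp)`. -/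
noncomputable def T (Λ : Measure ℝ) (y : ℝ) : ℝ :=
  ∫ p in Set.Ioc y 1, 1 / p ^ 2 ∂Λ

/-!
For `p ∈ (0,1]` the integrand of `λ(b)` is `p⁻² ∑_{j ≥ 2} B_{b,j}(p)` with the Bernstein
polynomials `B_{b,j}(p) = C(b,j) p^j (1-p)^{b-j}`, and the `j`-th summand is `C(b,j)` times the
integrand of `λ_{b,j}`; so the left-hand side is the `Λ`-integral of `p⁻² ∑_{j > k} B_{b,j}(p)`,
once `Λ{0} = 0` removes the atom at `0`. The derivative of the binomial tail `∑_{j > k} B_{b,j}`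
telescopes to `b B_{b-1,k}`, hence the tail is `C(b,k) (b-k) ∫_0^p y^k (1-y)^{b-k-1} dy`.
Exchanging the order of integration over `{0 < y < p ≤ 1}` turns the weight `p⁻²` into `T(y)`.
-/

open Polynomial

namespace bernsteinPolynomial

variable {R : Type*} [CommRing R]

theorem derivative_sum_Ioc (n k : ℕ) {m : ℕ} (hkm : k ≤ m) :
    derivative (∑ ν ∈ Finset.Ioc k m, bernsteinPolynomial R (n + 1) ν) =
      (n + 1) * (bernsteinPolynomial R n k - bernsteinPolynomial R n m) := by
  induction m, hkm using Nat.le_induction with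
  | base => simp
  | succ m hkm ih =>
    rw [Finset.sum_Ioc_succ_top hkm, derivative_add, ih, derivative_succ_aux]
    ring

theorem eval_eq_sq_mul {n ν : ℕ} (hν : 2 ≤ ν) (p : R) :
    (bernsteinPolynomial R n ν).eval p =
      p ^ 2 * (n.choose ν * (p ^ (ν - 2) * (1 - p) ^ (n - ν))) := by
  obtain ⟨j, rfl⟩ := Nat.exists_eq_add_of_le' hν
  simp only [bernsteinPolynomial, pow_add, eval_mul, eval_natCast, eval_pow, eval_X, eval_sub,
    eval_one, add_tsub_cancel_right]
  ring

theorem eval_sum_Ioc_one (n : ℕ) (p : R) :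
    (∑ ν ∈ Finset.Ioc 1 n, bernsteinPolynomial R n ν).eval p =
      1 - (1 - p) ^ n - n * p * (1 - p) ^ (n - 1) := by
  rcases Nat.eq_zero_or_pos n with rfl | hn
  · simp
  have h := congrArg (eval p) (bernsteinPolynomial.sum R n)
  rw [Finset.range_eq_Ico, Finset.sum_eq_sum_Ico_succ_bot (by omega),
    Finset.sum_eq_sum_Ico_succ_bot (by omega)] at h
  rw [← Finset.Ico_add_one_add_one_eq_Ioc]
  simp only [eval_add, eval_one] at h
  simp only [bernsteinPolynomial, Nat.choose_zero_right, Nat.choose_one_right, Nat.cast_one,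
    pow_zero, pow_one, mul_one, one_mul, tsub_zero, zero_add, eval_pow, eval_sub, eval_one, eval_X,
    eval_mul, eval_natCast, Nat.reduceAdd] at h ⊢
  linear_combination h

theorem eval_sum_Ioc_eq_integral {n k : ℕ} (hk : k ≤ n + 1) (p : ℝ) :
    (∑ ν ∈ Finset.Ioc k (n + 1), bernsteinPolynomial ℝ (n + 1) ν).eval p =
      (n + 1) * ∫ y in (0:ℝ)..p, (bernsteinPolynomial ℝ n k).eval y := by
  set F := ∑ ν ∈ Finset.Ioc k (n + 1), bernsteinPolynomial ℝ (n + 1) ν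
  have hF' : derivative F = (n + 1) * bernsteinPolynomial ℝ n k := by
    rw [derivative_sum_Ioc n k hk, eq_zero_of_lt ℝ n.lt_succ_self, sub_zero]
  have hF0 : F.eval 0 = 0 := by
    simp only [F, eval_finsetSum, eval_at_0]
    exact Finset.sum_eq_zero fun ν hν => if_neg (Finset.mem_Ioc.1 hν).1.ne_bot
  have := intervalIntegral.integral_eq_sub_of_hasDerivAt (fun y _ => F.hasDerivAt y)
    (F.derivative.continuous.intervalIntegrable 0 p) (a := 0) (b := p)
  simp only [hF', hF0, eval_mul, eval_add, eval_natCast, eval_one, sub_zero,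
    intervalIntegral.integral_const_mul] at this
  exact this.symm
end bernsteinPolynomial
lemma setIntegral_Ioc_indicator_Iio {p : ℝ} (hp : p ∈ Ioc (0:ℝ) 1) (g : ℝ → ℝ) :
    ∫ y in Ioc (0:ℝ) 1, (Iio p).indicator g y = ∫ y in (0:ℝ)..p, g y := by
  have hIoo : Iio p ∩ Ioc 0 1 = Ioo 0 p := by
    ext y; simp only [mem_inter_iff, mem_Iio, mem_Ioc, mem_Ioo]
    constructor
    · rintro ⟨hyp, hy0, -⟩; exact ⟨hy0, hyp⟩
    · rintro ⟨hy0, hyp⟩; exact ⟨hyp, hy0, hyp.le.trans hp.2⟩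
  rw [integral_indicator measurableSet_Iio, Measure.restrict_restrict measurableSet_Iio, hIoo,
    intervalIntegral.integral_of_le hp.1.le, setIntegral_congr_set Ioo_ae_eq_Ioc]

lemma setIntegral_Ioc_indicator_Ioi (μ : Measure ℝ) {y : ℝ} (hy : y ∈ Ioc (0:ℝ) 1)
    (g : ℝ → ℝ) :
    ∫ p in Ioc (0:ℝ) 1, (Ioi y).indicator g p ∂μ = ∫ p in Ioc y 1, g p ∂μ := by
  have hIoc : Ioi y ∩ Ioc 0 1 = Ioc y 1 := by
    ext p; simp only [mem_inter_iff, mem_Ioi, mem_Ioc]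
    constructor
    · rintro ⟨hyp, -, hp1⟩; exact ⟨hyp, hp1⟩
    · rintro ⟨hyp, hp1⟩; exact ⟨hyp, hy.1.trans hyp, hp1⟩
  rw [integral_indicator measurableSet_Ioi, Measure.restrict_restrict measurableSet_Ioi, hIoc]

section Fubini

variable (μ : Measure ℝ) [IsFiniteMeasure μ] {φ : ℝ → ℝ} {C : ℝ}

lemma integrable_indicator_lt_div_sq (hφ : Measurable φ)
    (hφC : ∀ y ∈ Ioc (0:ℝ) 1, |φ y| ≤ C * y) :
    Integrable ({q : ℝ × ℝ | q.2 < q.1}.indicator fun q => φ q.2 / q.1 ^ 2)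
      ((μ.restrict (Ioc 0 1)).prod (volume.restrict (Ioc 0 1))) := by
  set ν := volume.restrict (Ioc (0:ℝ) 1)
  set K := {q : ℝ × ℝ | q.2 < q.1}.indicator fun q => φ q.2 / q.1 ^ 2
  have hφint : IntegrableOn φ (Ioc 0 1) :=
    Integrable.mono' (continuous_const.mul continuous_id).integrableOn_Ioc
      hφ.aestronglyMeasurable ((ae_restrict_iff' measurableSet_Ioc).2 <| ae_of_all _ hφC)
  have hK : AEStronglyMeasurable K ((μ.restrict (Ioc 0 1)).prod ν) :=
    ((by fun_prop : Measurable fun q : ℝ × ℝ => φ q.2 / q.1 ^ 2).indicator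
      (measurableSet_lt measurable_snd measurable_fst)).aestronglyMeasurable
  have hsection (p y : ℝ) : K (p, y) = (Iio p).indicator (fun y => φ y / p ^ 2) y := rfl
  have hsection_int (p : ℝ) : Integrable (fun y => K (p, y)) ν := by
    simp only [hsection]
    exact (hφint.div_const _).indicator measurableSet_Iio
  refine (integrable_prod_iff hK).2 ⟨ae_of_all _ hsection_int, ?_⟩
  -- `|φ y| ≤ C y` compensates the weight `p⁻²`: every `p`-section has mass at most `C / 2`.
  refine Integrable.mono' (integrable_const (C / 2)) hK.norm.integral_prod_right' ?_
  filter_upwards [ae_restrict_mem measurableSet_Ioc] with p hp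
  rw [norm_of_nonneg (integral_nonneg fun _ => norm_nonneg _)]
  calc ∫ y, ‖K (p, y)‖ ∂ν
      ≤ ∫ y in Ioc (0:ℝ) 1, (Iio p).indicator (fun y => C * y / p ^ 2) y := by
        refine setIntegral_mono_on (hsection_int p).norm ?_ measurableSet_Ioc fun y hy => ?_
        · exact (continuous_const.mul continuous_id |>.div_const _).integrableOn_Ioc.indicator
            measurableSet_Iio
        · rw [hsection, norm_indicator_eq_indicator_norm]
          refine indicator_le_indicator ?_
          simp only [norm_div, norm_pow, Real.norm_eq_abs, sq_abs]
          exact div_le_div_of_nonneg_right (hφC y hy) (sq_nonneg p)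
    _ = C / 2 := by
        rw [setIntegral_Ioc_indicator_Iio hp, intervalIntegral.integral_div,
          intervalIntegral.integral_const_mul, integral_id]
        field_simp [hp.1.ne']
        ring

theorem setIntegral_intervalIntegral_div_sq_eq_integral_mul_T (hφ : Measurable φ)
    (hφC : ∀ y ∈ Ioc (0:ℝ) 1, |φ y| ≤ C * y) :
    ∫ p in Ioc (0:ℝ) 1, (∫ y in (0:ℝ)..p, φ y) / p ^ 2 ∂μ =
      ∫ y in (0:ℝ)..1, φ y * T μ y := by
  set K := {q : ℝ × ℝ | q.2 < q.1}.indicator fun q => φ q.2 / q.1 ^ 2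
  have hsection (p y : ℝ) : K (p, y) = (Iio p).indicator (fun y => φ y / p ^ 2) y := rfl
  have hsection' (p y : ℝ) : K (p, y) = (Ioi y).indicator (fun p => φ y / p ^ 2) p := rfl
  calc ∫ p in Ioc (0:ℝ) 1, (∫ y in (0:ℝ)..p, φ y) / p ^ 2 ∂μ
      = ∫ p in Ioc (0:ℝ) 1, (∫ y in Ioc (0:ℝ) 1, K (p, y)) ∂μ := by
        refine setIntegral_congr_fun measurableSet_Ioc fun p hp => ?_
        simp only [hsection, setIntegral_Ioc_indicator_Iio hp, intervalIntegral.integral_div]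
    _ = ∫ y in Ioc (0:ℝ) 1, ∫ p in Ioc (0:ℝ) 1, K (p, y) ∂μ :=
        integral_integral_swap (f := fun p y => K (p, y))
          (integrable_indicator_lt_div_sq μ hφ hφC)
    _ = ∫ y in Ioc (0:ℝ) 1, φ y * T μ y := by
        refine setIntegral_congr_fun measurableSet_Ioc fun y hy => ?_
        simp only [hsection', setIntegral_Ioc_indicator_Ioi μ hy, T, ← integral_const_mul,
          mul_one_div]
    _ = ∫ y in (0:ℝ)..1, φ y * T μ y := (intervalIntegral.integral_of_le zero_le_one).symm

end Fubini

section JumpRates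

variable {b k : ℕ} {p : ℝ}

lemma lamInt_natCast_eq_sum (hb : 1 ≤ b) (hp : p ≠ 0) :
    lamInt b p =
      ∑ j ∈ Finset.Ioc 1 b, (b.choose j : ℝ) * (p ^ (j - 2) * (1 - p) ^ (b - j)) := by
  have hexp : (b : ℝ) - 1 = ((b - 1 : ℕ) : ℝ) := by rw [Nat.cast_sub hb, Nat.cast_one]
  rw [lamInt, if_neg hp, hexp, rpow_natCast, rpow_natCast, div_eq_iff (pow_ne_zero 2 hp),
    ← bernsteinPolynomial.eval_sum_Ioc_one, eval_finsetSum, Finset.sum_mul]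
  refine Finset.sum_congr rfl fun j hj => ?_
  rw [bernsteinPolynomial.eval_eq_sq_mul (Finset.mem_Ioc.1 hj).1]
  ring

lemma sum_Ioc_choose_mul_eq_integral (hk : 1 ≤ k) (hkb : k < b) (hp : p ≠ 0) :
    ∑ j ∈ Finset.Ioc k b, (b.choose j : ℝ) * (p ^ (j - 2) * (1 - p) ^ (b - j)) =
      b.choose k * ((b : ℝ) - k) *
        ((∫ y in (0:ℝ)..p, y ^ k * (1 - y) ^ (b - k - 1)) / p ^ 2) := by
  obtain ⟨n, rfl⟩ : ∃ n, b = n + 1 := ⟨b - 1, by omega⟩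
  have hchoose : ((n + 1).choose k : ℝ) * ((n + 1 : ℕ) - k : ℝ) = n.choose k * (n + 1) := by
    rw [← Nat.cast_sub hkb.le]
    exact_mod_cast (Nat.choose_mul_succ_eq n k).symm
  have hbern (y : ℝ) : (bernsteinPolynomial ℝ n k).eval y =
      n.choose k * (y ^ k * (1 - y) ^ (n + 1 - k - 1)) := by
    simp [bernsteinPolynomial, show n + 1 - k - 1 = n - k by omega, mul_assoc]
  rw [hchoose, ← mul_div_assoc, eq_div_iff (pow_ne_zero 2 hp), Finset.sum_mul]
  calc ∑ j ∈ Finset.Ioc k (n + 1),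
        (n + 1).choose j * (p ^ (j - 2) * (1 - p) ^ (n + 1 - j)) * p ^ 2
      = (∑ j ∈ Finset.Ioc k (n + 1), bernsteinPolynomial ℝ (n + 1) j).eval p := by
        rw [eval_finsetSum]
        refine Finset.sum_congr rfl fun j hj => ?_
        rw [bernsteinPolynomial.eval_eq_sq_mul (by linarith [(Finset.mem_Ioc.1 hj).1])]
        ring
    _ = _ := by
        rw [bernsteinPolynomial.eval_sum_Ioc_eq_integral (by omega)]
        simp only [hbern, intervalIntegral.integral_const_mul]
        ring

end JumpRates

section Integrals

variable {Λ : Measure ℝ} {b : ℕ}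

lemma lam_natCast_eq_setIntegral_Ioc (h0 : Λ {0} = 0) (hb : 1 ≤ b) :
    lam Λ b = ∫ p in Ioc (0:ℝ) 1,
      ∑ j ∈ Finset.Ioc 1 b, (b.choose j : ℝ) * (p ^ (j - 2) * (1 - p) ^ (b - j)) ∂Λ := by
  rw [lam, integral_Icc_eq_integral_Ioc' h0]
  exact setIntegral_congr_fun measurableSet_Ioc fun p hp => lamInt_natCast_eq_sum hb hp.1.ne'

lemma lamBK_eq_setIntegral_Ioc (h0 : Λ {0} = 0) {j : ℕ} (hj : 2 ≤ j) (hjb : j ≤ b) :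
    lamBK Λ b j = ∫ p in Ioc (0:ℝ) 1, p ^ (j - 2) * (1 - p) ^ (b - j) ∂Λ := by
  have hexp₁ : (j : ℝ) - 2 = ((j - 2 : ℕ) : ℝ) := by rw [Nat.cast_sub hj, Nat.cast_two]
  have hexp₂ : (b : ℝ) - j = ((b - j : ℕ) : ℝ) := by rw [Nat.cast_sub hjb]
  simp only [lamBK, integral_Icc_eq_integral_Ioc' h0, hexp₁, hexp₂, rpow_natCast]

end Integrals

lemma abs_pow_mul_one_sub_pow_le_self {k m : ℕ} (hk : k ≠ 0) {y : ℝ}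
    (hy : y ∈ Ioc (0:ℝ) 1) :
    |y ^ k * (1 - y) ^ m| ≤ y := by
  have h1y : 0 ≤ 1 - y := sub_nonneg.2 hy.2
  rw [abs_of_nonneg (mul_nonneg (pow_nonneg hy.1.le k) (pow_nonneg h1y m))]
  calc y ^ k * (1 - y) ^ m ≤ y * 1 :=
        mul_le_mul (pow_le_of_le_one hy.1.le hy.2 hk) (pow_le_one₀ h1y (by linarith [hy.1]))
          (pow_nonneg h1y m) hy.1.le
    _ = y := mul_one y

theorem lam_partial_sum_repr (Λ : Measure ℝ) [IsFiniteMeasure Λ] (h0 : Λ {0} = 0) :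
    ∀ b k : ℕ, 1 ≤ k → k < b →
      lam Λ (b : ℝ) - ∑ j ∈ Finset.Icc 2 k, (b.choose j : ℝ) * lamBK Λ b j =
        (b.choose k : ℝ) * ((b : ℝ) - (k : ℝ)) *
          ∫ y in (0:ℝ)..1, y ^ (k : ℝ) * (1 - y) ^ ((b : ℝ) - (k : ℝ) - 1) * T Λ y := by
  intro b k hk hkb
  set f : ℕ → ℝ → ℝ := fun j p => (b.choose j : ℝ) * (p ^ (j - 2) * (1 - p) ^ (b - j))
  have hf (j : ℕ) : IntegrableOn (f j) (Ioc 0 1) Λ :=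
    (by fun_prop : Continuous (f j)).integrableOn_Ioc
  have hexp : (b : ℝ) - k - 1 = ((b - k - 1 : ℕ) : ℝ) := by
    rw [Nat.sub_sub, Nat.cast_sub (hkb : k + 1 ≤ b)]
    push_cast
    ring
  calc lam Λ b - ∑ j ∈ Finset.Icc 2 k, (b.choose j : ℝ) * lamBK Λ b j
      = ∑ j ∈ Finset.Ioc k b, ∫ p in Ioc (0:ℝ) 1, f j p ∂Λ := by
        have hlamBK : ∑ j ∈ Finset.Icc 2 k, (b.choose j : ℝ) * lamBK Λ b j =
            ∑ j ∈ Finset.Ioc 1 k, ∫ p in Ioc (0:ℝ) 1, f j p ∂Λ := by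
          refine Finset.sum_congr (Finset.Icc_add_one_left_eq_Ioc 1 k) fun j hj => ?_
          obtain ⟨hj2, hjk⟩ := Finset.mem_Icc.1 hj
          rw [lamBK_eq_setIntegral_Ioc h0 hj2 (by omega), ← integral_const_mul]
        rw [lam_natCast_eq_setIntegral_Ioc h0 (by omega), integral_finsetSum _ fun j _ => hf j,
          ← Finset.sum_Ioc_consecutive _ hk hkb.le, hlamBK, add_sub_cancel_left]
    _ = ∫ p in Ioc (0:ℝ) 1, (b.choose k * ((b : ℝ) - k) *
          ((∫ y in (0:ℝ)..p, y ^ k * (1 - y) ^ (b - k - 1)) / p ^ 2)) ∂Λ := by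
        rw [← integral_finsetSum _ fun j _ => hf j]
        exact setIntegral_congr_fun measurableSet_Ioc fun p hp =>
          sum_Ioc_choose_mul_eq_integral hk hkb hp.1.ne'
    _ = _ := by
        rw [integral_const_mul,
          setIntegral_intervalIntegral_div_sq_eq_integral_mul_T Λ (by fun_prop) fun y hy =>
            (abs_pow_mul_one_sub_pow_le_self (by omega) hy).trans_eq (one_mul y).symm]
        simp only [hexp, rpow_natCast]
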